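/- Let the activation be h-smoothly approximately ReLU with h > 0. Let V = (V_1,…,V_{L+1}) and W = (W_1,…,W_{L+1}) be weight tuples and ℓ ∈ {1,…,L} such that V_j = W_j for all j ≠ ℓ, and suppose ‖V‖, ‖W‖ > √(L + 1/2). Then for every example s (with ‖x_s‖ = 1) and every layer j ∈ {1,…,L}: ‖Σ_{j,s}^V − Σ_{j,s}^W‖_op ≤ ‖V_ℓ − W_ℓ‖_op·‖V‖^{L+1} / h. -/

import Mathlib

open scoped BigOperators
noncomputable section

abbrev Params (L p : ℕ) := EuclideanSpace ℝ ((Fin L × Fin p × Fin p) ⊕ Fin p)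

def layerMat {L p : ℕ} (w : Params L p) (ℓ : Fin L) : Matrix (Fin p) (Fin p) ℝ :=
  Matrix.of fun i j => w (Sum.inl (ℓ, i, j))

def outVec {L p : ℕ} (w : Params L p) : Fin p → ℝ := fun j => w (Sum.inr j)

def SmoothApproxReLU (φ : ℝ → ℝ) (h : ℝ) : Prop :=
  Differentiable ℝ φ ∧ φ 0 = 0 ∧
    (∀ z₁ z₂ : ℝ, |deriv φ z₁ - deriv φ z₂| ≤ (1 / h) * |z₁ - z₂|) ∧
    (∀ z : ℝ, |deriv φ z| ≤ 1) ∧ (∀ z : ℝ, |deriv φ z * z - φ z| ≤ h / 2)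

def feat {L p : ℕ} (φ : ℝ → ℝ) (w : Params L p) (x : Fin p → ℝ) : ℕ → Fin p → ℝ
  | 0 => x
  | ℓ + 1 =>
    if hl : ℓ < L then fun i => φ ((layerMat w ⟨ℓ, hl⟩).mulVec (feat φ w x ℓ) i)
    else feat φ w x ℓ

def netOut {L p : ℕ} (φ : ℝ → ℝ) (w : Params L p) (x : Fin p → ℝ) : ℝ :=
  ∑ j, outVec w j * feat φ w x L j

def lossS {L p : ℕ} (φ : ℝ → ℝ) (x : Fin p → ℝ) (y : ℝ) (w : Params L p) : ℝ :=
  Real.log (1 + Real.exp (-(y * netOut φ w x)))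

def loss {L p n : ℕ} (φ : ℝ → ℝ) (x : Fin n → Fin p → ℝ) (y : Fin n → ℝ) (w : Params L p) : ℝ :=
  (1 / (n : ℝ)) * ∑ s, lossS φ (x s) (y s) w

def enorm {p : ℕ} (v : Fin p → ℝ) : ℝ := Real.sqrt (∑ i, v i ^ 2)

def hmax (L p : ℕ) (J1 nV1 : ℝ) : ℝ :=
  min ((L : ℝ) ^ ((L : ℝ) / 2 - 3) * Real.log (1 / J1) / (24 * Real.sqrt p * nV1 ^ L)) 1

def alphaMax (L p : ℕ) (J1 nV1 h : ℝ) : ℝ :=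
  min (h / (1024 * ((L : ℝ) + 1) ^ 2 * p * J1 * nV1 ^ (3 * L + 5)))
    (((L : ℝ) + 1 / 2) * nV1 ^ 2 /
      (2 * L * ((L : ℝ) + 3 / 4) ^ 2 * J1 * Real.log (1 / J1) ^ ((2 : ℝ) / L)))

def Qtilde (L : ℕ) (J1 nV1 α : ℝ) : ℝ :=
  (L : ℝ) * ((L : ℝ) + 3 / 4) ^ 2 * α * J1 * Real.log (1 / J1) ^ ((2 : ℝ) / L) /
    (((L : ℝ) + 1 / 2) * nV1 ^ 2)

def lipGrad {L p : ℕ} (J : Params L p → ℝ) (v : Params L p) : ℝ :=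
  Filter.limsup (fun w : Params L p => ‖gradient J v - gradient J w‖ / ‖v - w‖)
    (nhdsWithin v {v}ᶜ)

/-- Operator (ℓ²→ℓ²) norm of a real matrix. -/
def opNorm {m k : ℕ} (A : Matrix (Fin m) (Fin k) ℝ) : ℝ :=
  ‖LinearMap.toContinuousLinearMap (Matrix.toEuclideanLin A)‖

/-- Outer-layer weights viewed as a `1 × p` matrix. -/
def outMat {L p : ℕ} (w : Params L p) : Matrix (Fin 1) (Fin p) ℝ :=
  Matrix.of fun _ j => w (Sum.inr j)

/-- Pre-activation features `u_{ℓ+1,s}^V` of the hidden layer with 0-based index `ℓ`. -/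
def uFeat {L p : ℕ} (φ : ℝ → ℝ) (w : Params L p) (x : Fin p → ℝ) (ℓ : Fin L) : Fin p → ℝ :=
  (layerMat w ℓ).mulVec (feat φ w x ℓ)

/-- The diagonal matrix `Σ_{ℓ+1,s}^V = diag(φ'(u_{ℓ+1,s}^V))`. -/
def sigmaMat {L p : ℕ} (φ : ℝ → ℝ) (w : Params L p) (x : Fin p → ℝ) (ℓ : Fin L) :
    Matrix (Fin p) (Fin p) ℝ :=
  Matrix.diagonal fun i => deriv φ (uFeat φ w x ℓ i)

/-- `g_s(V) = 1 / (1 + exp(y_s f_V(x_s)))`. -/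
def gS {L p : ℕ} (φ : ℝ → ℝ) (x : Fin p → ℝ) (y : ℝ) (w : Params L p) : ℝ :=
  1 / (1 + Real.exp (y * netOut φ w x))

/-- `V` and `W` agree on every layer except possibly the one with paper index `ℓ + 1`
(`ℓ : Fin (L+1)`; the value `ℓ = L` designates the outer layer `V_{L+1}`). -/
def eqExcept {L p : ℕ} (V W : Params L p) (ℓ : Fin (L + 1)) : Prop :=
  (∀ j : Fin L, (j : ℕ) ≠ (ℓ : ℕ) → layerMat V j = layerMat W j) ∧
    ((ℓ : ℕ) < L → outMat V = outMat W)

/-- Operator norm `‖V_ℓ - W_ℓ‖_op` of the difference at the (single) layer with paper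
index `ℓ + 1`. -/
def layerOpDiff {L p : ℕ} (V W : Params L p) (ℓ : Fin (L + 1)) : ℝ :=
  if h : (ℓ : ℕ) < L then opNorm (layerMat V ⟨ℓ, h⟩ - layerMat W ⟨ℓ, h⟩)
  else opNorm (outMat V - outMat W)


/-! Only layer `ℓ` differs, so the pre-activations agree below `ℓ`, differ at `ℓ` by at most
`‖V_ℓ - W_ℓ‖_op ‖x_ℓ‖ ≤ ‖V_ℓ - W_ℓ‖_op ‖V‖^ℓ`, and each later layer (a matrix of operator norm at
most `‖V‖` followed by the `1`-Lipschitz `φ`) multiplies the discrepancy by at most `‖V‖`.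
Since `φ'` is `1/h`-Lipschitz and a diagonal matrix has operator norm equal to its largest entry,
`‖Σ_j^V - Σ_j^W‖_op ≤ ‖V_ℓ - W_ℓ‖_op ‖V‖^j / h`; finally `‖V‖ > √(L + 1/2) ≥ 1` raises the
exponent to `L + 1`. -/

open scoped Matrix Matrix.Norms.L2Operator
open WithLp (toLp)

lemma opNorm_eq_l2_opNorm {m k : ℕ} (A : Matrix (Fin m) (Fin k) ℝ) : opNorm A = ‖A‖ := rfl

lemma enorm_eq_norm_toLp {p : ℕ} (v : Fin p → ℝ) : _root_.enorm v = ‖toLp 2 v‖ := by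
  simp [_root_.enorm, EuclideanSpace.norm_eq]

lemma nonneg_of_forall_abs_sub_le_mul {f : ℝ → ℝ} {K : ℝ}
    (hf : ∀ a b, |f a - f b| ≤ K * |a - b|) : 0 ≤ K := by
  simpa using (abs_nonneg _).trans (hf 1 0)

section EuclideanBounds

variable {ι κ : Type*} [Fintype ι] [Fintype κ]

lemma norm_toLp_le_of_abs_le {a b : ι → ℝ} (hab : ∀ i, |a i| ≤ |b i|) :
    ‖toLp 2 a‖ ≤ ‖toLp 2 b‖ := by
  simp only [EuclideanSpace.norm_eq, Real.norm_eq_abs]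
  exact Real.sqrt_le_sqrt <| Finset.sum_le_sum fun i _ => pow_le_pow_left₀ (abs_nonneg _) (hab i) 2

lemma norm_toLp_comp_sub_le {φ : ℝ → ℝ} (hφ : LipschitzWith 1 φ) (a b : ι → ℝ) :
    ‖toLp 2 ((fun i => φ (a i)) - fun i => φ (b i))‖ ≤ ‖toLp 2 (a - b)‖ :=
  norm_toLp_le_of_abs_le fun i => by simpa [Real.dist_eq] using hφ.dist_le_mul (a i) (b i)

variable [DecidableEq ι]

lemma norm_toLp_mulVec_le (A : Matrix κ ι ℝ) (v : ι → ℝ) :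
    ‖toLp 2 (A *ᵥ v)‖ ≤ ‖A‖ * ‖toLp 2 v‖ :=
  A.l2_opNorm_mulVec (toLp 2 v)

lemma l2_opNorm_le_sqrt_sum_sq (A : Matrix κ ι ℝ) : ‖A‖ ≤ √(∑ i, ∑ j, A i j ^ 2) := by
  refine ContinuousLinearMap.opNorm_le_bound _ (Real.sqrt_nonneg _) fun v => ?_
  change ‖toLp 2 (A *ᵥ v.ofLp)‖ ≤ _
  simp only [EuclideanSpace.norm_eq, Real.norm_eq_abs, sq_abs]
  rw [← Real.sqrt_mul (by positivity), Finset.sum_mul]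
  refine Real.sqrt_le_sqrt <| Finset.sum_le_sum fun i _ => ?_
  exact Finset.sum_mul_sq_le_sq_mul_sq _ (A i) v.ofLp

lemma l2_opNorm_diagonal_comp_sub_le {f : ℝ → ℝ} {K : ℝ}
    (hf : ∀ a b, |f a - f b| ≤ K * |a - b|) (u v : ι → ℝ) :
    ‖Matrix.diagonal (fun i => f (u i)) - Matrix.diagonal (fun i => f (v i))‖ ≤
      K * ‖toLp 2 (u - v)‖ := by
  have hK := nonneg_of_forall_abs_sub_le_mul hf
  rw [Matrix.diagonal_sub, Matrix.l2_opNorm_diagonal]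
  refine (pi_norm_le_iff_of_nonneg (by positivity)).2 fun i => ?_
  calc ‖f (u i) - f (v i)‖ ≤ K * |u i - v i| := hf _ _
    _ ≤ K * ‖toLp 2 (u - v)‖ := by gcongr; exact PiLp.norm_apply_le (toLp 2 (u - v)) i

end EuclideanBounds

lemma SmoothApproxReLU.lipschitzWith {φ : ℝ → ℝ} {h : ℝ} (hφ : SmoothApproxReLU φ h) :
    LipschitzWith 1 φ :=
  lipschitzWith_of_nnnorm_deriv_le hφ.1 fun z => by
    rw [← NNReal.coe_le_coe, coe_nnnorm]
    exact hφ.2.2.2.1 z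

lemma l2_opNorm_layerMat_le {L p : ℕ} (w : Params L p) (ℓ : Fin L) : ‖layerMat w ℓ‖ ≤ ‖w‖ := by
  refine (l2_opNorm_le_sqrt_sum_sq _).trans ?_
  rw [EuclideanSpace.norm_eq]
  refine Real.sqrt_le_sqrt ?_
  simp only [Real.norm_eq_abs, sq_abs, Fintype.sum_sum_type, Fintype.sum_prod_type]
  have hout : 0 ≤ ∑ j, w (Sum.inr j) ^ 2 := by positivity
  have hlayer : ∑ i, ∑ j, layerMat w ℓ i j ^ 2 ≤ ∑ m, ∑ i, ∑ j, w (Sum.inl (m, i, j)) ^ 2 :=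
    Finset.single_le_sum (f := fun m => ∑ i, ∑ j, w (Sum.inl (m, i, j)) ^ 2)
      (fun m _ => by positivity) (Finset.mem_univ ℓ)
  linarith

lemma layerMat_eq_of_eqExcept {L p : ℕ} {V W : Params L p} {ℓ : Fin L}
    (hVW : eqExcept V W ℓ.castSucc) (j : Fin L) (hj : j ≠ ℓ) : layerMat V j = layerMat W j :=
  hVW.1 j (by simpa [Fin.val_castSucc] using Fin.val_ne_of_ne hj)

section Network

variable {L p : ℕ} {φ : ℝ → ℝ} (x : Fin p → ℝ)

lemma feat_succ (w : Params L p) {j : ℕ} (hj : j < L) :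
    feat φ w x (j + 1) = fun i => φ (uFeat φ w x ⟨j, hj⟩ i) := by
  simp [feat, uFeat, hj]

lemma norm_feat_le (hφ : LipschitzWith 1 φ) (hφ0 : φ 0 = 0) (w : Params L p) :
    ∀ j ≤ L, ‖toLp 2 (feat φ w x j)‖ ≤ ‖w‖ ^ j * ‖toLp 2 x‖ := by
  intro j hj
  induction j with
  | zero => simp [feat]
  | succ j ih =>
    rw [feat_succ x w hj]
    calc ‖toLp 2 fun i => φ (uFeat φ w x ⟨j, hj⟩ i)‖ ≤ ‖toLp 2 (uFeat φ w x ⟨j, hj⟩)‖ :=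
          norm_toLp_le_of_abs_le fun i => by
            simpa [hφ0, Real.dist_eq] using hφ.dist_le_mul (uFeat φ w x ⟨j, hj⟩ i) 0
      _ ≤ ‖layerMat w ⟨j, hj⟩‖ * ‖toLp 2 (feat φ w x j)‖ := norm_toLp_mulVec_le _ _
      _ ≤ ‖w‖ * (‖w‖ ^ j * ‖toLp 2 x‖) := by
          gcongr
          exacts [l2_opNorm_layerMat_le w _, ih (by omega)]
      _ = ‖w‖ ^ (j + 1) * ‖toLp 2 x‖ := by ring

lemma feat_eq_of_layerMat_eq {V W : Params L p} {k : ℕ}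
    (hVW : ∀ j : Fin L, (j : ℕ) < k → layerMat V j = layerMat W j) :
    ∀ j ≤ k, feat φ V x j = feat φ W x j := by
  intro j hj
  induction j with
  | zero => rfl
  | succ j ih =>
    by_cases hl : j < L
    · simp [feat, hl, ih (by omega), hVW ⟨j, hl⟩ hj]
    · simp [feat, hl, ih (by omega)]

lemma norm_uFeat_sub_le (hφ : LipschitzWith 1 φ) (hφ0 : φ 0 = 0) {V W : Params L p} {ℓ : Fin L}
    (hVW : ∀ j, j ≠ ℓ → layerMat V j = layerMat W j) (j : Fin L) :
    ‖toLp 2 (uFeat φ V x j - uFeat φ W x j)‖ ≤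
      ‖layerMat V ℓ - layerMat W ℓ‖ * ‖V‖ ^ (j : ℕ) * ‖toLp 2 x‖ := by
  have hbelow : ∀ j ≤ (ℓ : ℕ), feat φ V x j = feat φ W x j :=
    feat_eq_of_layerMat_eq x fun j hj => hVW j (Fin.ne_of_val_ne hj.ne)
  obtain ⟨n, hn⟩ := j
  induction n using Nat.strong_induction_on with | _ n ih =>
  rcases lt_trichotomy n ℓ with hlt | rfl | hgt
  · have hu : uFeat φ V x ⟨n, hn⟩ = uFeat φ W x ⟨n, hn⟩ := by
      rw [uFeat, uFeat, hbelow n hlt.le, hVW _ (Fin.ne_of_val_ne hlt.ne)]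
    rw [hu, sub_self, WithLp.toLp_zero, norm_zero]
    positivity
  · have hu : uFeat φ V x ℓ - uFeat φ W x ℓ =
        (layerMat V ℓ - layerMat W ℓ) *ᵥ feat φ V x ℓ := by
      rw [uFeat, uFeat, hbelow ℓ le_rfl, Matrix.sub_mulVec]
    rw [Fin.eta, hu, mul_assoc]
    refine (norm_toLp_mulVec_le _ _).trans ?_
    gcongr
    exact norm_feat_le x hφ hφ0 V ℓ ℓ.is_lt.le
  · obtain ⟨m, rfl⟩ : ∃ m, n = m + 1 := ⟨n - 1, by omega⟩
    have hm : m < L := by omega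
    have hu : uFeat φ V x ⟨m + 1, hn⟩ - uFeat φ W x ⟨m + 1, hn⟩ =
        layerMat V ⟨m + 1, hn⟩ *ᵥ (feat φ V x (m + 1) - feat φ W x (m + 1)) := by
      rw [uFeat, uFeat, hVW _ (Fin.ne_of_val_ne hgt.ne'), Matrix.mulVec_sub]
    calc ‖toLp 2 (uFeat φ V x ⟨m + 1, hn⟩ - uFeat φ W x ⟨m + 1, hn⟩)‖
        ≤ ‖V‖ * ‖toLp 2 (uFeat φ V x ⟨m, hm⟩ - uFeat φ W x ⟨m, hm⟩)‖ := by
          rw [hu]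
          refine (norm_toLp_mulVec_le _ _).trans ?_
          gcongr
          · exact l2_opNorm_layerMat_le V _
          · rw [feat_succ x V hm, feat_succ x W hm]
            exact norm_toLp_comp_sub_le hφ _ _
      _ ≤ ‖V‖ * (‖layerMat V ℓ - layerMat W ℓ‖ * ‖V‖ ^ m * ‖toLp 2 x‖) := by
          gcongr
          exact ih m (by omega) hm
      _ = ‖layerMat V ℓ - layerMat W ℓ‖ * ‖V‖ ^ (m + 1) * ‖toLp 2 x‖ := by ring

end Network

theorem statement15_general
    (L p : ℕ)
    (φ : ℝ → ℝ) (h : ℝ) (hφ : SmoothApproxReLU φ h)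
    (x : Fin p → ℝ) (hx : _root_.enorm x = 1)
    (V W : Params L p) (ℓ : Fin L) (hdiff : eqExcept V W ℓ.castSucc)
    (hV : Real.sqrt ((L : ℝ) + 1 / 2) < ‖V‖) :
    ∀ j : Fin L, opNorm (sigmaMat φ V x j - sigmaMat φ W x j) ≤
      opNorm (layerMat V ℓ - layerMat W ℓ) * ‖V‖ ^ (L + 1) / h := by
  intro j
  have hV1 : 1 ≤ ‖V‖ := by
    have hL : (1 : ℝ) ≤ L := by exact_mod_cast ℓ.pos
    exact le_trans (Real.one_le_sqrt.2 (by linarith)) hV.le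
  have hinv := nonneg_of_forall_abs_sub_le_mul hφ.2.2.1
  have hu := norm_uFeat_sub_le x hφ.lipschitzWith hφ.2.1 (layerMat_eq_of_eqExcept hdiff) j
  rw [enorm_eq_norm_toLp] at hx
  rw [hx, mul_one] at hu
  rw [opNorm_eq_l2_opNorm, opNorm_eq_l2_opNorm]
  calc ‖sigmaMat φ V x j - sigmaMat φ W x j‖
      ≤ 1 / h * ‖toLp 2 (uFeat φ V x j - uFeat φ W x j)‖ :=
        l2_opNorm_diagonal_comp_sub_le hφ.2.2.1 _ _
    _ ≤ 1 / h * (‖layerMat V ℓ - layerMat W ℓ‖ * ‖V‖ ^ (L + 1)) := by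
        grw [hu, pow_le_pow_right₀ hV1 (by omega : (j : ℕ) ≤ L + 1)]
    _ = ‖layerMat V ℓ - layerMat W ℓ‖ * ‖V‖ ^ (L + 1) / h := by ring

/-- Lemma `l:phi.prime.close`: if `V` and `W` differ only in the hidden
layer with paper index `ℓ + 1` (`ℓ : Fin L`), then all the diagonal matrices
`Σ_{j,s}` move by at most `‖V_ℓ - W_ℓ‖_op ‖V‖^{L+1} / h` in operator norm. -/
theorem statement15
    (L p : ℕ) (hL : 1 ≤ L) (hp : 1 ≤ p)
    (φ : ℝ → ℝ) (h : ℝ) (hh0 : 0 < h) (hφ : SmoothApproxReLU φ h)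
    (x : Fin p → ℝ) (hx : _root_.enorm x = 1)
    (V W : Params L p) (ℓ : Fin L) (hdiff : eqExcept V W ℓ.castSucc)
    (hV : Real.sqrt ((L : ℝ) + 1 / 2) < ‖V‖) (hW : Real.sqrt ((L : ℝ) + 1 / 2) < ‖W‖) :
    ∀ j : Fin L, opNorm (sigmaMat φ V x j - sigmaMat φ W x j) ≤
      opNorm (layerMat V ℓ - layerMat W ℓ) * ‖V‖ ^ (L + 1) / h :=
  statement15_general L p φ h hφ x hx V W ℓ hdiff hV
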